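/- arXiv:2603.24483 — 5 statements merged into one kernel-verified Lean document; each statement's English description precedes it below -/
import Mathlib

section
/- Let E ⊂ ℝ² be a convex body and x ∈ ∂E. Suppose that near x, in coordinates where e is tangent to ∂E at x, the boundary ∂E − x is the graph {(x', u(x')) : |x'| ≤ ε_x} of a nonnegative convex function u with u(0)=0 over the tangent direction, within the rectangle {|x'| ≤ ε_x, t ≤ t_x}. Then for every 0 < ε ≤ min(ε_x, t_x), the circle ∂B_ε(x) intersects ∂E in exactly two points. -/
/-!
In the frame `(e, f)` at `z`, a point `z + s • e + t • f` of the circle `∂B_ε(z)` has `|s| ≤ ε` and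
`t ≤ ε`, so it lies in the rectangle where `∂E` is the graph of `u`; hence the circle meets `∂E`
exactly at the roots of `s ^ 2 + u s ^ 2 = ε ^ 2` in `[-ε_x, ε_x]`. Since `u` is convex with
minimum `0` at `0`, it is monotone on each side of `0`, so `s ^ 2 + u s ^ 2` is strictly monotone
on each side and, by the intermediate value theorem, takes the value `ε ^ 2` exactly once on each
side. Convexity alone does not make `u` continuous at `± ε_x`; continuity there comes from the
graph of `u` being closed, as a piece of `∂E` cut out by a closed rectangle.
-/

open Set Filter Topology

theorem continuousOn_of_isClosed_graph {X Y : Type*} [TopologicalSpace X] [TopologicalSpace Y]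
    {f : X → Y} {s : Set X} {K : Set Y} (hK : IsCompact K) (hfK : MapsTo f s K)
    (hgraph : IsClosed {q : X × Y | q.1 ∈ s ∧ q.2 = f q.1}) : ContinuousOn f s := by
  intro x hx
  refine hK.tendsto_nhds_of_unique_mapClusterPt (eventually_mem_nhdsWithin.mono hfK) ?_
  intro y _ hy
  have hxy : MapClusterPt (x, y) (𝓝[s] x) fun x' ↦ (x', f x') := by
    rw [((𝓝 x).basis_sets.prod_nhds (𝓝 y).basis_sets).mapClusterPt_iff_frequently]
    rintro ⟨U, V⟩ ⟨hU, hV⟩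
    exact ((mapClusterPt_iff_frequently.1 hy V hV).and_eventually
      (mem_nhdsWithin_of_mem_nhds hU)).mono fun _ h ↦ ⟨h.2, h.1⟩
  exact (hgraph.mem_of_mapClusterPt hxy (eventually_mem_nhdsWithin.mono fun _ h ↦ ⟨h, rfl⟩)).2

section ConvexOn

variable {𝕜 β : Type*} [Field 𝕜] [LinearOrder 𝕜] [IsStrictOrderedRing 𝕜]
  [AddCommMonoid β] [LinearOrder β] [IsOrderedCancelAddMonoid β] [Module 𝕜 β]
  [PosSMulStrictMono 𝕜 β] {s : Set 𝕜} {f : 𝕜 → β} {x : 𝕜}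

theorem ConvexOn.monotoneOn_of_isMinOn (hf : ConvexOn 𝕜 s f) (hmin : IsMinOn f s x)
    (hx : x ∈ s) : MonotoneOn f (s ∩ Ici x) := by
  rintro a ⟨has, hxa⟩ b ⟨hbs, -⟩ hab
  rcases hxa.eq_or_lt with rfl | hxa
  · exact hmin hbs
  · exact hf.le_right_of_left_le'' hx hbs hxa hab (hmin has :)

theorem ConvexOn.antitoneOn_of_isMinOn (hf : ConvexOn 𝕜 s f) (hmin : IsMinOn f s x)
    (hx : x ∈ s) : AntitoneOn f (s ∩ Iic x) := by
  rintro a ⟨has, -⟩ b ⟨hbs, hbx⟩ hab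
  rcases hbx.eq_or_lt with rfl | hbx
  · exact hmin has
  · exact hf.le_left_of_right_le'' has hx hab hbx (hmin hbs :)

end ConvexOn

theorem existsUnique_sq_add_sq_eq {v : ℝ → ℝ} {a ε : ℝ} (hc : ContinuousOn v (Icc 0 a))
    (hmono : MonotoneOn v (Icc 0 a)) (hv0 : v 0 = 0) (hε : 0 < ε) (hεa : ε ≤ a) :
    ∃! s, s ∈ Ioc 0 a ∧ s ^ 2 + v s ^ 2 = ε ^ 2 := by
  have hv_nonneg : ∀ {s}, s ∈ Icc 0 a → 0 ≤ v s := fun hs ↦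
    hv0 ▸ hmono (left_mem_Icc.2 (hs.1.trans hs.2)) hs hs.1
  have hstrict : StrictMonoOn (fun s ↦ s ^ 2 + v s ^ 2) (Icc 0 a) := by
    intro s hs t ht hst
    have := pow_le_pow_left₀ (hv_nonneg hs) (hmono hs ht hst.le) 2
    have := pow_lt_pow_left₀ hst hs.1 two_ne_zero
    simp only
    linarith
  obtain ⟨s, hs, hs_eq⟩ : ε ^ 2 ∈ (fun s ↦ s ^ 2 + v s ^ 2) '' Icc 0 ε := by
    refine intermediate_value_Icc hε.le ?_ ⟨?_, ?_⟩
    · exact (continuousOn_id.pow 2).add ((hc.mono (Icc_subset_Icc_right hεa)).pow 2)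
    · simp [hv0, sq_nonneg]
    · simp [sq_nonneg]
  have hs0 : s ≠ 0 := by
    rintro rfl
    exact (pow_pos hε 2).ne (by simpa [hv0] using hs_eq)
  refine ⟨s, ⟨⟨hs.1.lt_of_ne' hs0, hs.2.trans hεa⟩, hs_eq⟩, fun t ⟨ht, ht_eq⟩ ↦ ?_⟩
  exact hstrict.injOn (Ioc_subset_Icc_self ht) ⟨hs.1, hs.2.trans hεa⟩ (ht_eq.trans hs_eq.symm)

theorem exists_pair_setOf_sq_add_sq_eq {u : ℝ → ℝ} {a ε : ℝ}
    (hc : ContinuousOn u (Icc (-a) a)) (hmono : MonotoneOn u (Icc 0 a))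
    (hanti : AntitoneOn u (Icc (-a) 0)) (hu0 : u 0 = 0) (hε : 0 < ε) (hεa : ε ≤ a) :
    ∃ s₁ s₂, s₁ < s₂ ∧ {s ∈ Icc (-a) a | s ^ 2 + u s ^ 2 = ε ^ 2} = {s₁, s₂} := by
  have hneg_mem : ∀ {s}, s ∈ Icc 0 a → -s ∈ Icc (-a) 0 := fun hs ↦
    ⟨by linarith [hs.2], by linarith [hs.1]⟩
  obtain ⟨r, ⟨hr, hr_eq⟩, hr_uniq⟩ :=
    existsUnique_sq_add_sq_eq (hc.mono (Icc_subset_Icc_left (by linarith))) hmono hu0 hε hεa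
  obtain ⟨l, ⟨hl, hl_eq⟩, hl_uniq⟩ := existsUnique_sq_add_sq_eq (v := fun s ↦ u (-s))
    (hc.comp continuousOn_neg fun s hs ↦ Icc_subset_Icc_right (by linarith) (hneg_mem hs))
    (fun s hs t ht hst ↦ hanti (hneg_mem ht) (hneg_mem hs) (neg_le_neg hst)) (by simpa) hε hεa
  refine ⟨-l, r, by linarith [hl.1, hr.1], ?_⟩
  ext s
  simp only [mem_sep_iff, mem_insert_iff, mem_singleton_iff]
  constructor
  · rintro ⟨hs, hs_eq⟩
    rcases lt_trichotomy s 0 with hneg | rfl | hpos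
    · left
      have := hl_uniq (-s) ⟨⟨by linarith, by linarith [hs.1]⟩, by simpa using hs_eq⟩
      linarith
    · exact absurd (by simpa [hu0] using hs_eq) (pow_pos hε 2).ne
    · exact .inr (hr_uniq s ⟨⟨hpos, hs.2⟩, hs_eq⟩)
  · rintro (rfl | rfl)
    · exact ⟨⟨by linarith [hl.2], by linarith [hl.1]⟩, by simpa using hl_eq⟩
    · exact ⟨⟨by linarith [hr.1], hr.2⟩, hr_eq⟩

section Frame

variable {V : Type*} [NormedAddCommGroup V] [InnerProductSpace ℝ V] {e f : V}

theorem Orthonormal.norm_smul_add_smul_sq (ho : Orthonormal ℝ ![e, f]) (s t : ℝ) :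
    ‖s • e + t • f‖ ^ 2 = s ^ 2 + t ^ 2 := by
  have he : ‖e‖ = 1 := ho.norm_eq_one 0
  have hf : ‖f‖ = 1 := ho.norm_eq_one 1
  have hef : inner ℝ e f = 0 := ho.inner_eq_zero (i := 0) (j := 1) (by decide)
  rw [norm_add_sq_real, norm_smul, norm_smul, real_inner_smul_left, real_inner_smul_right, hef,
    he, hf]
  simp

theorem Orthonormal.exists_eq_add_smul_add_smul (ho : Orthonormal ℝ ![e, f])
    (hV : Module.finrank ℝ V = 2) (z p : V) : ∃ s t : ℝ, p = z + s • e + t • f := by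
  have : FiniteDimensional ℝ V := Module.finite_of_finrank_eq_succ hV
  let b := OrthonormalBasis.mk ho
    (ho.linearIndependent.span_eq_top_of_card_eq_finrank (by simp [hV])).ge
  refine ⟨inner ℝ e (p - z), inner ℝ f (p - z), ?_⟩
  have := b.sum_repr' (p - z)
  simp only [b, OrthonormalBasis.coe_mk, Fin.sum_univ_two, Matrix.cons_val_zero,
    Matrix.cons_val_one] at this
  rw [add_assoc, this, add_sub_cancel]

theorem Orthonormal.add_smul_add_smul_inj (ho : Orthonormal ℝ ![e, f]) {z : V}
    {s t s' t' : ℝ} : z + s • e + t • f = z + s' • e + t' • f ↔ s = s' ∧ t = t' := by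
  rw [add_assoc, add_assoc, add_right_inj]
  exact ⟨ho.linearIndependent.eq_of_pair, by rintro ⟨rfl, rfl⟩; rfl⟩

theorem Orthonormal.add_smul_add_smul_mem_sphere_iff (ho : Orthonormal ℝ ![e, f]) {z : V}
    {s t ε : ℝ} (hε : 0 ≤ ε) : z + s • e + t • f ∈ Metric.sphere z ε ↔ s ^ 2 + t ^ 2 = ε ^ 2 := by
  rw [mem_sphere_iff_norm, add_assoc, add_sub_cancel_left, ← ho.norm_smul_add_smul_sq,
    sq_eq_sq₀ (norm_nonneg _) hε]

variable {E : Set V} {z : V} {εx tx : ℝ} {u : ℝ → ℝ}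

theorem isClosed_graph_of_frontier_inter_eq (ho : Orthonormal ℝ ![e, f])
    (hgraph : frontier E ∩ {p | ∃ s t : ℝ, |s| ≤ εx ∧ t ≤ tx ∧ p = z + s • e + t • f}
      = {p | ∃ s : ℝ, |s| ≤ εx ∧ p = z + s • e + u s • f}) :
    IsClosed {q : ℝ × ℝ | q.1 ∈ Icc (-εx) εx ∧ q.2 = u q.1} := by
  have hclosed : IsClosed
      {q : ℝ × ℝ | z + q.1 • e + q.2 • f ∈ frontier E ∧ |q.1| ≤ εx ∧ q.2 ≤ tx} :=
    (isClosed_frontier.preimage (by fun_prop)).inter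
      ((isClosed_le continuous_fst.abs continuous_const).inter
        (isClosed_le continuous_snd continuous_const))
  convert hclosed using 1
  ext ⟨s, t⟩
  simp only [mem_ofPred_eq]
  constructor
  · rintro ⟨hs, rfl⟩
    obtain ⟨hp, s', t', hs', ht', heq⟩ := hgraph.symm.subset ⟨s, abs_le.2 hs, rfl⟩
    obtain ⟨rfl, rfl⟩ := ho.add_smul_add_smul_inj.1 heq
    exact ⟨hp, hs', ht'⟩
  · rintro ⟨hp, hs, ht⟩
    obtain ⟨s', hs', heq⟩ := hgraph.subset ⟨hp, s, t, hs, ht, rfl⟩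
    obtain ⟨rfl, rfl⟩ := ho.add_smul_add_smul_inj.1 heq
    exact ⟨abs_le.1 hs', rfl⟩

theorem frontier_inter_sphere_eq_image (ho : Orthonormal ℝ ![e, f])
    (hV : Module.finrank ℝ V = 2)
    (hgraph : frontier E ∩ {p | ∃ s t : ℝ, |s| ≤ εx ∧ t ≤ tx ∧ p = z + s • e + t • f}
      = {p | ∃ s : ℝ, |s| ≤ εx ∧ p = z + s • e + u s • f})
    {ε : ℝ} (hε : 0 ≤ ε) (hεεx : ε ≤ εx) (hεtx : ε ≤ tx) :
    frontier E ∩ Metric.sphere z ε =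
      (fun s ↦ z + s • e + u s • f) '' {s ∈ Icc (-εx) εx | s ^ 2 + u s ^ 2 = ε ^ 2} := by
  ext p
  obtain ⟨s, t, rfl⟩ := ho.exists_eq_add_smul_add_smul hV z p
  rw [mem_inter_iff, ho.add_smul_add_smul_mem_sphere_iff hε]
  constructor
  · rintro ⟨hp, hst⟩
    have hs : |s| ≤ ε := abs_le_of_sq_le_sq (by nlinarith) hε
    have ht : t ≤ ε := (le_abs_self t).trans (abs_le_of_sq_le_sq (by nlinarith) hε)
    obtain ⟨s', hs', heq⟩ := hgraph.subset ⟨hp, s, t, hs.trans hεεx, ht.trans hεtx, rfl⟩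
    obtain ⟨rfl, rfl⟩ := ho.add_smul_add_smul_inj.1 heq
    exact ⟨s, ⟨abs_le.1 hs', hst⟩, rfl⟩
  · rintro ⟨s', ⟨hs', hs'_eq⟩, heq⟩
    obtain ⟨rfl, rfl⟩ := ho.add_smul_add_smul_inj.1 heq
    exact ⟨(hgraph.symm.subset ⟨s', abs_le.2 hs', rfl⟩).1, hs'_eq⟩

end Frame

theorem sphere_inter_frontier_two_points_general
    (E : Set (EuclideanSpace ℝ (Fin 2)))
    (z : EuclideanSpace ℝ (Fin 2))
    (e f : EuclideanSpace ℝ (Fin 2)) (he : ‖e‖ = 1) (hf : ‖f‖ = 1)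
    (hef : (inner ℝ e f : ℝ) = 0)
    (εx tx : ℝ) (hεx : 0 < εx)
    (u : ℝ → ℝ) (hu : ConvexOn ℝ (Set.Icc (-εx) εx) u) (hu0 : u 0 = 0)
    (hunn : ∀ s ∈ Set.Icc (-εx) εx, 0 ≤ u s)
    (hgraph : frontier E ∩ {p | ∃ s t : ℝ, |s| ≤ εx ∧ t ≤ tx ∧ p = z + s • e + t • f}
      = {p | ∃ s : ℝ, |s| ≤ εx ∧ p = z + s • e + u s • f}) :
    ∀ ε : ℝ, 0 < ε → ε ≤ min εx tx →
      ∃ p q : EuclideanSpace ℝ (Fin 2), p ≠ q ∧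
        frontier E ∩ Metric.sphere z ε = {p, q} := by
  intro ε hε hεmin
  have ho : Orthonormal ℝ ![e, f] := by simp [he, hf, hef]
  have h0 : (0 : ℝ) ∈ Icc (-εx) εx := ⟨by linarith, hεx.le⟩
  have hmin : IsMinOn u (Icc (-εx) εx) 0 := fun s hs ↦ hu0.trans_le (hunn s hs)
  have hcont : ContinuousOn u (Icc (-εx) εx) :=
    continuousOn_of_isClosed_graph isCompact_Icc
      (fun s hs ↦ ⟨hunn s hs, hu.le_max_of_mem_Icc (left_mem_Icc.2 (h0.1.trans h0.2))
        (right_mem_Icc.2 (h0.1.trans h0.2)) hs⟩)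
      (isClosed_graph_of_frontier_inter_eq ho hgraph)
  obtain ⟨s₁, s₂, hlt, hroots⟩ := exists_pair_setOf_sq_add_sq_eq hcont
    ((hu.monotoneOn_of_isMinOn hmin h0).mono fun s hs ↦ ⟨⟨by linarith [hs.1], hs.2⟩, hs.1⟩)
    ((hu.antitoneOn_of_isMinOn hmin h0).mono fun s hs ↦ ⟨⟨hs.1, by linarith [hs.2]⟩, hs.2⟩)
    hu0 hε (hεmin.trans (min_le_left _ _))
  refine ⟨z + s₁ • e + u s₁ • f, z + s₂ • e + u s₂ • f,
    fun h ↦ hlt.ne (ho.add_smul_add_smul_inj.1 h).1, ?_⟩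
  rw [frontier_inter_sphere_eq_image ho finrank_euclideanSpace_fin hgraph hε.le
    (hεmin.trans (min_le_left _ _)) (hεmin.trans (min_le_right _ _)), hroots, image_pair]

/-- Let `E ⊂ ℝ²` be a convex body and `x = z ∈ ∂E`. If, in an orthonormal frame `{e, f}` with
`e` tangent to `∂E` at `z`, the boundary `∂E - z` coincides inside the rectangle
`{|s| ≤ ε_x, t ≤ t_x}` with the graph of a nonnegative convex function `u` with `u 0 = 0`,
then for every `0 < ε ≤ min ε_x t_x` the circle `∂B_ε(z)` meets `∂E` in exactly two points. -/
theorem sphere_inter_frontier_two_points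
    (E : Set (EuclideanSpace ℝ (Fin 2))) (hEc : IsCompact E) (hEconv : Convex ℝ E)
    (hEint : (interior E).Nonempty)
    (z : EuclideanSpace ℝ (Fin 2)) (hz : z ∈ frontier E)
    (e f : EuclideanSpace ℝ (Fin 2)) (he : ‖e‖ = 1) (hf : ‖f‖ = 1)
    (hef : (inner ℝ e f : ℝ) = 0)
    (εx tx : ℝ) (hεx : 0 < εx) (htx : 0 < tx)
    (u : ℝ → ℝ) (hu : ConvexOn ℝ (Set.Icc (-εx) εx) u) (hu0 : u 0 = 0)
    (hunn : ∀ s ∈ Set.Icc (-εx) εx, 0 ≤ u s)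
    (hgraph : frontier E ∩ {p | ∃ s t : ℝ, |s| ≤ εx ∧ t ≤ tx ∧ p = z + s • e + t • f}
      = {p | ∃ s : ℝ, |s| ≤ εx ∧ p = z + s • e + u s • f}) :
    ∀ ε : ℝ, 0 < ε → ε ≤ min εx tx →
      ∃ p q : EuclideanSpace ℝ (Fin 2), p ≠ q ∧
        frontier E ∩ Metric.sphere z ε = {p, q} :=
  sphere_inter_frontier_two_points_general E z e f he hf hef εx tx hεx u hu hu0 hunn hgraph
end

section
/- Let u : [x_−, x_+] → ℝ be a convex C^{1,1} function, and let l^±(x) = u(x_±) + u'(x_±)(x − x_±) be its tangent lines at the endpoints. Then the perimeter excess of the graph over the tangent lines satisfies ∫_{x̄}^{x_+} √(1+(u'_+)²) − ∫_{x̄}^{x_+} √(1+(u')²) ≤ u'_+ ∫_{x̄}^{x_+} (t − x̄) u''(t) dt for any x̄ ∈ [x_−, x_+] with u'_+ := u'(x_+) ≥ 0, where u'' exists a.e. -/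
/-!
Since `u''` is nonnegative, `u'` increases to `u'_+` on `[x̄, x₊]`, and the elementary bound
`√(1 + a²) - √(1 + b²) ≤ a (a - b)` for `b ≤ a`, `0 ≤ a` turns the integrand into
`u'_+ (u'_+ - u'(t)) = u'_+ ∫_t^{x₊} u''`. Integrating in `t`, an integration by parts against
`t - x̄` (equivalently, Fubini) gives the weight `t - x̄`.
-/

open MeasureTheory

theorem Real.sqrt_one_add_sq_sub_le {a b : ℝ} (ha : 0 ≤ a) (hba : b ≤ a) :
    √(1 + a ^ 2) - √(1 + b ^ 2) ≤ a * (a - b) := by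
  have hB : √(1 + b ^ 2) ^ 2 = 1 + b ^ 2 := Real.sq_sqrt (by positivity)
  have hB_one : 1 ≤ √(1 + b ^ 2) := Real.one_le_sqrt.mpr (by nlinarith)
  have hB_b : b ≤ √(1 + b ^ 2) := Real.le_sqrt_of_sq_le (by nlinarith)
  -- squaring, it suffices that `a + b ≤ 2 a √(1 + b²)`, true as `√(1 + b²) ≥ max 1 b`
  rw [sub_le_iff_le_add, Real.sqrt_le_left (by nlinarith [mul_nonneg ha (sub_nonneg.2 hba)])]
  nlinarith [mul_nonneg ha (sub_nonneg.2 hba), mul_nonneg (sub_nonneg.2 hba) (sub_nonneg.2 hB_one),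
    mul_nonneg (sub_nonneg.2 hba) (sub_nonneg.2 hB_b), mul_nonneg ha (sub_nonneg.2 hB_one)]

theorem intervalIntegral.integral_integral_eq_integral_sub_mul {g : ℝ → ℝ} {a b : ℝ}
    (hg : IntervalIntegrable g volume a b) :
    ∫ t in a..b, ∫ s in t..b, g s = ∫ s in a..b, (s - a) * g s := by
  set G : ℝ → ℝ := fun t ↦ ∫ s in b..t, g s
  have hG : AbsolutelyContinuousOnInterval G a b :=
    hg.absolutelyContinuousOnInterval_intervalIntegral Set.right_mem_uIcc
  have hid : AbsolutelyContinuousOnInterval (fun s ↦ s - a) a b :=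
    (contDiffOn_id.sub contDiffOn_const).absolutelyContinuousOnInterval
  have hG' : ∀ᵐ s, s ∈ Set.uIoc a b → (s - a) * g s = (s - a) * deriv G s := by
    filter_upwards [hg.ae_hasDerivAt_integral] with s hs hsab
    rw [(hs (Set.uIoc_subset_uIcc hsab) b Set.right_mem_uIcc).deriv]
  rw [intervalIntegral.integral_congr_ae hG', hid.integral_mul_deriv_eq_deriv_mul hG]
  simp [G, intervalIntegral.integral_symm b]

theorem perimeter_excess_le_general (u u'' : ℝ → ℝ) (xm xp xb : ℝ)
    (hxb : xb ∈ Set.Icc xm xp)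
    (hnn : ∀ t ∈ Set.Icc xm xp, 0 ≤ u'' t)
    (hFTC : ∀ a ∈ Set.Icc xm xp, ∀ b ∈ Set.Icc xm xp,
      deriv u b - deriv u a = ∫ s in a..b, u'' s)
    (hInt : IntervalIntegrable u'' volume xm xp)
    (hIntS : IntervalIntegrable (fun t => Real.sqrt (1 + (deriv u t) ^ 2)) volume xb xp)
    (hpos : 0 ≤ deriv u xp) :
    (∫ _t in xb..xp, Real.sqrt (1 + (deriv u xp) ^ 2))
        - ∫ t in xb..xp, Real.sqrt (1 + (deriv u t) ^ 2)
      ≤ deriv u xp * ∫ t in xb..xp, (t - xb) * u'' t := by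
  obtain ⟨hxm, hxp⟩ := hxb
  have hInt' : IntervalIntegrable u'' volume xb xp :=
    hInt.mono_set (Set.uIcc_subset_uIcc (Set.mem_uIcc_of_le hxm hxp) Set.right_mem_uIcc)
  have hpointwise : ∀ t ∈ Set.Icc xb xp, √(1 + deriv u xp ^ 2) - √(1 + deriv u t ^ 2)
      ≤ deriv u xp * ∫ s in t..xp, u'' s := by
    intro t ⟨hxt, htp⟩
    have hjump := hFTC t ⟨hxm.trans hxt, htp⟩ xp ⟨hxm.trans hxp, le_rfl⟩
    have hjump_nonneg : 0 ≤ ∫ s in t..xp, u'' s :=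
      intervalIntegral.integral_nonneg htp fun s hs ↦ hnn s ⟨hxm.trans (hxt.trans hs.1), hs.2⟩
    rw [← hjump]
    exact Real.sqrt_one_add_sq_sub_le hpos (by linarith)
  have hprimitive : IntervalIntegrable (fun t ↦ deriv u xp * ∫ s in t..xp, u'' s) volume xb xp :=
    (continuousOn_const.mul (intervalIntegral.continuousOn_primitive_interval_left
      ((intervalIntegrable_iff' (μ := volume)).mp hInt'))).intervalIntegrable
  calc (∫ _t in xb..xp, √(1 + deriv u xp ^ 2)) - ∫ t in xb..xp, √(1 + deriv u t ^ 2)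
      = ∫ t in xb..xp, (√(1 + deriv u xp ^ 2) - √(1 + deriv u t ^ 2)) :=
        (intervalIntegral.integral_sub intervalIntegrable_const hIntS).symm
    _ ≤ ∫ t in xb..xp, deriv u xp * ∫ s in t..xp, u'' s :=
        intervalIntegral.integral_mono_on hxp (intervalIntegrable_const.sub hIntS) hprimitive
          hpointwise
    _ = deriv u xp * ∫ t in xb..xp, (t - xb) * u'' t := by
        rw [intervalIntegral.integral_const_mul,
          intervalIntegral.integral_integral_eq_integral_sub_mul hInt']

/-- Perimeter excess estimate: for a convex `C^{1,1}` function `u` on `[x₋, x₊]` with second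
derivative `u''` (a.e., linked to `u'` by the fundamental theorem of calculus), with
`u'_+ = u'(x₊) ≥ 0` and any `x̄ ∈ [x₋, x₊]`,
`∫_{x̄}^{x₊} √(1+(u'_+)²) - ∫_{x̄}^{x₊} √(1+(u')²) ≤ u'_+ ∫_{x̄}^{x₊} (t - x̄) u''(t) dt`. -/
theorem perimeter_excess_le (u u'' : ℝ → ℝ) (xm xp xb : ℝ) (hle : xm ≤ xp)
    (hxb : xb ∈ Set.Icc xm xp)
    (hconv : ConvexOn ℝ (Set.Icc xm xp) u)
    (hdiff : ∀ t ∈ Set.Icc xm xp, DifferentiableAt ℝ u t)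
    (hnn : ∀ t ∈ Set.Icc xm xp, 0 ≤ u'' t)
    (hFTC : ∀ a ∈ Set.Icc xm xp, ∀ b ∈ Set.Icc xm xp,
      deriv u b - deriv u a = ∫ s in a..b, u'' s)
    (hInt : IntervalIntegrable u'' volume xm xp)
    (hIntS : IntervalIntegrable (fun t => Real.sqrt (1 + (deriv u t) ^ 2)) volume xb xp)
    (hIntW : IntervalIntegrable (fun t => (t - xb) * u'' t) volume xb xp)
    (hpos : 0 ≤ deriv u xp) :
    (∫ _t in xb..xp, Real.sqrt (1 + (deriv u xp) ^ 2))
        - ∫ t in xb..xp, Real.sqrt (1 + (deriv u t) ^ 2)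
      ≤ deriv u xp * ∫ t in xb..xp, (t - xb) * u'' t :=
  perimeter_excess_le_general u u'' xm xp xb hxb hnn hFTC hInt hIntS hpos
end

section
/- Let u : ℝ → ℝ be convex and C^{1,1} with u(0) = u'(0) = 0 and suppose 0 is a Lebesgue point of u'' with a := u''(0) > 0. Then the intersection point x̄ of the two tangent lines l^±(x) = u(±x₀) + u'(±x₀)(x ∓ x₀) at ±x₀ satisfies x̄/x₀ → 0 as x₀ → 0⁺. -/
open MeasureTheory Filter Set

/-!
Subtracting the quadratic `a t² / 2` from `u` leaves the numerator of `x̄` unchanged and lowers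
its denominator by exactly `2 a x₀`. For the remainder `v` the Lebesgue point condition bounds the
oscillation of `v'` on `[-x₀, x₀]` by `I = ∫_{-x₀}^{x₀} |u'' - a| = o(x₀)`, and two applications
of the mean value theorem bound the numerator by `2 I x₀`. Since the denominator is at least
`2 a x₀ - I ≥ a x₀`, we get `|x̄ / x₀| ≤ 2 I / (a x₀) → 0`.
-/

lemma abs_sub_sub_mul_le_integral_abs_sub {F g : ℝ → ℝ} {a r s p q : ℝ}
    (hF : F q - F p = ∫ t in p..q, g t) (hg : IntervalIntegrable g volume r s)
    (hrp : r ≤ p) (hpq : p ≤ q) (hqs : q ≤ s) :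
    |F q - F p - a * (q - p)| ≤ ∫ t in r..s, |g t - a| := by
  have hg' : IntervalIntegrable g volume p q := hg.mono_set <| by
    rw [uIcc_of_le hpq, uIcc_of_le (hrp.trans (hpq.trans hqs))]
    exact Icc_subset_Icc hrp hqs
  have hsub : F q - F p - a * (q - p) = ∫ t in p..q, (g t - a) := by
    rw [intervalIntegral.integral_sub hg' intervalIntegrable_const, hF,
      intervalIntegral.integral_const, smul_eq_mul, mul_comm]
  calc |F q - F p - a * (q - p)| ≤ ∫ t in p..q, |g t - a| := by
        rw [hsub]; exact intervalIntegral.abs_integral_le_integral_abs hpq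
    _ ≤ ∫ t in r..s, |g t - a| :=
        intervalIntegral.integral_mono_interval hrp hpq hqs (ae_of_all _ fun _ => abs_nonneg _)
          ((hg.sub intervalIntegrable_const).abs)

lemma abs_mul_deriv_sub_sub_le {v : ℝ → ℝ} {p q c M : ℝ} (hpq : p < q)
    (hvc : ContinuousOn v (Icc p q)) (hvd : DifferentiableOn ℝ v (Ioo p q))
    (hM : ∀ t ∈ Ioo p q, |deriv v c - deriv v t| ≤ M) :
    |(q - p) * deriv v c - (v q - v p)| ≤ M * (q - p) := by
  obtain ⟨ξ, hξ, hslope⟩ := exists_deriv_eq_slope v hpq hvc hvd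
  have hmvt : v q - v p = (q - p) * deriv v ξ := by
    rw [hslope]; field_simp [(sub_pos.2 hpq).ne']
  rw [hmvt, ← mul_sub, abs_mul, abs_of_pos (sub_pos.2 hpq), mul_comm]
  exact mul_le_mul_of_nonneg_right (hM ξ hξ) (sub_pos.2 hpq).le

lemma abs_tangent_numerator_le {u : ℝ → ℝ} {a x M : ℝ} (hu : Differentiable ℝ u) (hx : 0 < x)
    (hM : ∀ p q, -x ≤ p → p ≤ q → q ≤ x → |deriv u q - deriv u p - a * (q - p)| ≤ M) :
    |x * (deriv u x + deriv u (-x)) - (u x - u (-x))| ≤ 2 * M * x := by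
  set v : ℝ → ℝ := fun t => u t - a / 2 * t ^ 2
  have hv : Differentiable ℝ v := hu.sub ((differentiable_pow 2).const_mul _)
  have hv' : ∀ t, deriv v t = deriv u t - a * t := fun t => by
    have h := (hu t).hasDerivAt.sub ((hasDerivAt_pow 2 t).const_mul (a / 2))
    rw [show v = u - fun t => a / 2 * t ^ 2 from rfl, h.deriv]; push_cast; ring
  have hright : |(x - 0) * deriv v x - (v x - v 0)| ≤ M * (x - 0) :=
    abs_mul_deriv_sub_sub_le hx hv.continuous.continuousOn hv.differentiableOn fun t ht => by
      rw [hv', hv']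
      convert hM t x (by linarith [ht.1]) ht.2.le le_rfl using 2; ring
  have hleft : |(0 - -x) * deriv v (-x) - (v 0 - v (-x))| ≤ M * (0 - -x) :=
    abs_mul_deriv_sub_sub_le (by linarith) hv.continuous.continuousOn hv.differentiableOn
      fun t ht => by
        rw [hv', hv', abs_sub_comm]
        convert hM (-x) t le_rfl ht.1.le (by linarith [ht.2]) using 2; ring
  have hsplit : x * (deriv u x + deriv u (-x)) - (u x - u (-x))
      = ((x - 0) * deriv v x - (v x - v 0)) + ((0 - -x) * deriv v (-x) - (v 0 - v (-x))) := by
    simp only [v, hv']; ring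
  rw [hsplit]
  calc _ ≤ M * (x - 0) + M * (0 - -x) := (abs_add_le _ _).trans (add_le_add hright hleft)
    _ = 2 * M * x := by ring

lemma abs_tangent_intersection_div_le {u g : ℝ → ℝ} {a x : ℝ} (hu : Differentiable ℝ u)
    (hFTC : ∀ p q, deriv u q - deriv u p = ∫ t in p..q, g t)
    (hg : IntervalIntegrable g volume (-x) x) (hx : 0 < x)
    (hI : ∫ t in (-x)..x, |g t - a| < a * x) :
    |(x * (deriv u x + deriv u (-x)) - (u x - u (-x))) / (deriv u x - deriv u (-x)) / x|
      ≤ 2 * (∫ t in (-x)..x, |g t - a|) / (a * x) := by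
  set I := ∫ t in (-x)..x, |g t - a|
  have hM : ∀ p q, -x ≤ p → p ≤ q → q ≤ x → |deriv u q - deriv u p - a * (q - p)| ≤ I :=
    fun p q hp hpq hq => abs_sub_sub_mul_le_integral_abs_sub (hFTC p q) hg hp hpq hq
  have hN := abs_tangent_numerator_le hu hx hM
  have hI0 : 0 ≤ I := intervalIntegral.integral_nonneg (by linarith) fun _ _ => abs_nonneg _
  have hax : 0 < a * x := hI0.trans_lt hI
  have hD : a * x ≤ deriv u x - deriv u (-x) := by
    have := (abs_le.mp (hM (-x) x le_rfl (by linarith) le_rfl)).1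
    linarith
  rw [abs_div, abs_div, abs_of_pos (hax.trans_le hD), abs_of_pos hx, div_div]
  calc _ ≤ 2 * I * x / (a * x * x) :=
        div_le_div₀ (by positivity) hN (by positivity) (mul_le_mul_of_nonneg_right hD hx.le)
    _ = 2 * I / (a * x) := by field_simp

theorem tangent_intersection_small_general (u u'' : ℝ → ℝ) (a : ℝ) (ha : 0 < a)
    (hdiff : ∀ t : ℝ, DifferentiableAt ℝ u t)
    (hInt : ∀ x y : ℝ, IntervalIntegrable u'' volume x y)
    (hFTC : ∀ x y : ℝ, deriv u y - deriv u x = ∫ s in x..y, u'' s)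
    (hLeb : Tendsto (fun x : ℝ => (1 / (2 * x)) * ∫ s in (-x)..x, |u'' s - a|)
      (nhdsWithin 0 (Set.Ioi 0)) (nhds 0)) :
    Tendsto (fun x₀ : ℝ =>
        ((x₀ * (deriv u x₀ + deriv u (-x₀)) - (u x₀ - u (-x₀)))
            / (deriv u x₀ - deriv u (-x₀))) / x₀)
      (nhdsWithin 0 (Set.Ioi 0)) (nhds 0) := by
  have hlim := hLeb.const_mul (4 / a)
  rw [mul_zero] at hlim
  refine squeeze_zero_norm' ?_ hlim
  filter_upwards [self_mem_nhdsWithin, hLeb.eventually_lt_const (half_pos ha)]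
    with x (hx : 0 < x) hεx
  have hI : ∫ s in (-x)..x, |u'' s - a| < a * x := by
    rw [one_div, inv_mul_lt_iff₀ (by positivity)] at hεx
    linarith
  calc _ ≤ 2 * (∫ s in (-x)..x, |u'' s - a|) / (a * x) :=
        abs_tangent_intersection_div_le hdiff hFTC (hInt _ _) hx hI
    _ = 4 / a * (1 / (2 * x) * ∫ s in (-x)..x, |u'' s - a|) := by
        field_simp; ring

/-- Let `u` be convex `C^{1,1}` with `u 0 = u' 0 = 0` and suppose `0` is a Lebesgue point of
`u''` with value `a = u''(0) > 0`. Then the intersection point `x̄` of the tangent lines to the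
graph at `±x₀` satisfies `x̄ / x₀ → 0` as `x₀ → 0⁺`. -/
theorem tangent_intersection_small (u u'' : ℝ → ℝ) (a : ℝ) (ha : 0 < a)
    (hconv : ConvexOn ℝ Set.univ u)
    (hdiff : ∀ t : ℝ, DifferentiableAt ℝ u t)
    (hnn : ∀ t : ℝ, 0 ≤ u'' t)
    (hInt : ∀ x y : ℝ, IntervalIntegrable u'' volume x y)
    (hFTC : ∀ x y : ℝ, deriv u y - deriv u x = ∫ s in x..y, u'' s)
    (h0 : u 0 = 0) (h0' : deriv u 0 = 0)
    (hLeb : Tendsto (fun x : ℝ => (1 / (2 * x)) * ∫ s in (-x)..x, |u'' s - a|)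
      (nhdsWithin 0 (Set.Ioi 0)) (nhds 0)) :
    Tendsto (fun x₀ : ℝ =>
        ((x₀ * (deriv u x₀ + deriv u (-x₀)) - (u x₀ - u (-x₀)))
            / (deriv u x₀ - deriv u (-x₀))) / x₀)
      (nhdsWithin 0 (Set.Ioi 0)) (nhds 0) :=
  tangent_intersection_small_general u u'' a ha hdiff hInt hFTC hLeb
end

section
/- For γ ∈ (0, π) and α > γ close to γ, one has the expansion 1 − (1 − sin(α−γ)cos γ / sin α)·√(1 + tan²(α−γ)) = (α−γ)·(cos γ / sin γ) + o(α−γ) as α → γ⁺. -/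
open Filter Real Topology

/-! The expression `F(α) = 1 - (1 - sin (α - γ) cos γ / sin α) √(1 + tan² (α - γ))` vanishes
at `α = γ`, so it suffices that `F` has derivative `cot γ` at `γ`. Since `√(1 + tan² t) = 1 / |cos t|` is even in `t`, its derivative at `t = 0`
vanishes, and the derivative of `F` is just that of `sin (α - γ) cos γ / sin α`, which is
`cos γ / sin γ` by the quotient rule. -/

theorem HasDerivAt.tendsto_sub_sub_mul_div_sub {𝕜 : Type*} [NontriviallyNormedField 𝕜]
    {f : 𝕜 → 𝕜} {f' x : 𝕜} (hf : HasDerivAt f f' x) :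
    Tendsto (fun y => (f y - f x - (y - x) * f') / (y - x)) (𝓝[≠] x) (𝓝 0) := by
  have h := (hasDerivAt_iff_tendsto_slope.mp hf).sub_const f'
  rw [sub_self] at h
  refine h.congr' ?_
  filter_upwards [self_mem_nhdsWithin] with y hy
  rw [slope_def_field, sub_div _ ((y - x) * f'), mul_div_cancel_left₀ _ (sub_ne_zero.mpr hy)]

theorem hasDerivAt_sqrt_one_add_tan_sub_sq (γ : ℝ) :
    HasDerivAt (fun α => √(1 + tan (α - γ) ^ 2)) 0 γ := by
  have hinner : HasDerivAt (fun t => 1 + tan t ^ 2) 0 (γ - γ) := by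
    simpa using ((hasDerivAt_tan (by simp : cos (γ - γ) ≠ 0)).pow 2).const_add 1
  have hroot := (hasDerivAt_sqrt (by simp : 1 + tan (γ - γ) ^ 2 ≠ 0)).comp (γ - γ) hinner
  simpa [Function.comp_def] using hroot.comp_sub_const γ γ

theorem hasDerivAt_sin_sub_mul_cos_div_sin {γ : ℝ} (hγ : sin γ ≠ 0) :
    HasDerivAt (fun α => sin (α - γ) * cos γ / sin α) (cos γ / sin γ) γ := by
  have hnum : HasDerivAt (fun α => sin (α - γ) * cos γ) (cos γ) γ := by
    simpa using ((hasDerivAt_sin (γ - γ)).comp_sub_const γ γ).mul_const (cos γ)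
  refine (hnum.div (hasDerivAt_sin γ) hγ).congr_deriv ?_
  field_simp
  simp

/-- Key Taylor expansion in the proof of the contact-angle inequality: for `γ ∈ (0, π)`,
`1 - (1 - sin(α-γ) cos γ / sin α) √(1 + tan²(α-γ)) = (α-γ)(cos γ / sin γ) + o(α-γ)`
as `α → γ⁺`. -/
theorem contact_angle_taylor_expansion (γ : ℝ) (hγ : γ ∈ Set.Ioo 0 Real.pi) :
    Tendsto (fun α : ℝ =>
        ((1 - (1 - Real.sin (α - γ) * Real.cos γ / Real.sin α) *
              Real.sqrt (1 + Real.tan (α - γ) ^ 2))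
            - (α - γ) * (Real.cos γ / Real.sin γ)) / (α - γ))
      (nhdsWithin γ (Set.Ioi γ)) (nhds 0) := by
  have hsin : sin γ ≠ 0 := (sin_pos_of_pos_of_lt_pi hγ.1 hγ.2).ne'
  have hF : HasDerivAt (fun α => 1 - (1 - sin (α - γ) * cos γ / sin α) *
      √(1 + tan (α - γ) ^ 2)) (cos γ / sin γ) γ := by
    have hprod := ((hasDerivAt_sin_sub_mul_cos_div_sin hsin).const_sub 1).mul
      (hasDerivAt_sqrt_one_add_tan_sub_sq γ)
    exact (hprod.const_sub 1).congr_deriv (by simp)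
  have h := hF.tendsto_sub_sub_mul_div_sub.mono_left
    (nhdsWithin_mono (s := Set.Ioi γ) γ fun _ hα => ne_of_gt hα)
  simpa using h
end

section
/- Let n ≥ 2 and for R > 0 let E_R = D_R × [0, ε_R] ⊂ ℝⁿ be the cylinder of radius R and height ε_R = (ω_{n−1} R^{n−1})^{-1} (so |E_R| = 1), where D_R is the (n−1)-dimensional disk of radius R. Then for every α ∈ (1, n), the α-Riesz energy satisfies 𝓘_α(E_R) → 0 as R → ∞. -/
/-
Put `s = n - α`, so `0 < s < n - 1`. Push the uniform probability measure `ν` on the unit ball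
of `ℝⁿ⁻¹` forward under `x ↦ (R x, 0)`: the image is a probability measure carried by the bottom
face `D_R × {0}` of `E_R`, and since the map multiplies distances by `R`, its `s`-energy is
`R^{-s} I_s(ν)`. The energy `I_s(ν)` is finite because `|z|^{-s}` is locally integrable on `ℝⁿ⁻¹`
for `s < n - 1`, hence `𝓘_α(E_R) ≤ R^{-s} I_s(ν) → 0`.
-/

open MeasureTheory Filter

/-- The `α`-Riesz energy of `E ⊆ ℝⁿ` with values in `ℝ≥0∞`. -/
noncomputable def rieszEnergy (n : ℕ) (α : ℝ) (E : Set (EuclideanSpace ℝ (Fin n))) : ENNReal :=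
  sInf {r : ENNReal | ∃ μ : Measure (EuclideanSpace ℝ (Fin n)),
    IsProbabilityMeasure μ ∧ μ E = 1 ∧
    r = ∫⁻ p, (edist p.1 p.2) ^ (-((n : ℝ) - α)) ∂(μ.prod μ)}

open Metric ENNReal ProbabilityTheory Module Topology

theorem measurable_edist_rpow {X : Type*} [PseudoMetricSpace X] [MeasurableSpace X]
    [OpensMeasurableSpace X] [SecondCountableTopology X] (s : ℝ) :
    Measurable fun p : X × X => edist p.1 p.2 ^ (-s) :=
  ENNReal.continuous_rpow_const.measurable.comp measurable_edist

namespace MeasureTheory.Measure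

variable {X : Type*} [PseudoMetricSpace X] [MeasurableSpace X]

noncomputable def energy (s : ℝ) (μ : Measure X) : ℝ≥0∞ :=
  ∫⁻ p, edist p.1 p.2 ^ (-s) ∂(μ.prod μ)

theorem energy_smul (s : ℝ) (c : ℝ≥0∞) (μ : Measure X) [SFinite μ] :
    (c • μ).energy s = c * c * μ.energy s := by
  simp only [energy, prod_smul_left, prod_smul_right, lintegral_smul_measure, smul_eq_mul,
    mul_assoc]

variable [OpensMeasurableSpace X] [SecondCountableTopology X]

theorem energy_map_of_edist_eq {Y : Type*} [PseudoMetricSpace Y] [MeasurableSpace Y]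
    [OpensMeasurableSpace Y] [SecondCountableTopology Y] (s : ℝ) (μ : Measure X) [SFinite μ]
    {f : X → Y} (hf : Measurable f) {c : ℝ≥0∞} (hc : c ≠ ⊤)
    (hfc : ∀ x y, edist (f x) (f y) = c * edist x y) :
    (μ.map f).energy s = c ^ (-s) * μ.energy s := by
  rw [energy, map_prod_map _ _ hf hf, lintegral_map (measurable_edist_rpow s) (hf.prodMap hf),
    energy, ← lintegral_const_mul _ (measurable_edist_rpow s)]
  congr 1 with p
  simp only [Prod.map_fst, Prod.map_snd, hfc, ENNReal.mul_rpow_of_ne_top hc (edist_ne_top _ _)]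

end MeasureTheory.Measure

theorem rieszEnergy_le_energy {n : ℕ} (α : ℝ) {E : Set (EuclideanSpace ℝ (Fin n))}
    (μ : Measure (EuclideanSpace ℝ (Fin n))) [IsProbabilityMeasure μ] (hE : μ E = 1) :
    rieszEnergy n α E ≤ μ.energy (n - α) :=
  sInf_le ⟨μ, inferInstance, hE, rfl⟩

theorem lintegral_ball_edist_rpow_neg_le {E : Type*} [NormedAddCommGroup E] [MeasurableSpace E]
    [BorelSpace E] {μ : Measure E} [μ.IsAddRightInvariant] {s r : ℝ} {x : E}
    (hx : x ∈ ball 0 r) :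
    ∫⁻ y in ball 0 r, edist x y ^ (-s) ∂μ ≤ ∫⁻ z in ball 0 (2 * r), ‖z‖ₑ ^ (-s) ∂μ := by
  have hF : ∀ y, (ball 0 r).indicator (fun y => edist x y ^ (-s)) y ≤
      (ball 0 (2 * r)).indicator (fun z => ‖z‖ₑ ^ (-s)) (y - x) := by
    intro y
    by_cases hy : y ∈ ball 0 r
    · have hyx : y - x ∈ ball (0 : E) (2 * r) := by
        rw [mem_ball_zero_iff] at hx hy ⊢
        linarith [norm_sub_le y x]
      rw [Set.indicator_of_mem hy, Set.indicator_of_mem hyx, edist_comm, edist_eq_enorm_sub]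
    · simp [Set.indicator_of_notMem hy]
  calc ∫⁻ y in ball 0 r, edist x y ^ (-s) ∂μ
      = ∫⁻ y, (ball 0 r).indicator (fun y => edist x y ^ (-s)) y ∂μ :=
        (lintegral_indicator measurableSet_ball _).symm
    _ ≤ ∫⁻ y, (ball 0 (2 * r)).indicator (fun z => ‖z‖ₑ ^ (-s)) (y - x) ∂μ := lintegral_mono hF
    _ = ∫⁻ z in ball 0 (2 * r), ‖z‖ₑ ^ (-s) ∂μ := by
        rw [lintegral_sub_right_eq_self, lintegral_indicator measurableSet_ball]

section HaarBall

variable {E : Type*} [NormedAddCommGroup E] [NormedSpace ℝ E] [FiniteDimensional ℝ E]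
  [MeasurableSpace E] [BorelSpace E] {μ : Measure E} [μ.IsAddHaarMeasure] {s : ℝ}

theorem lintegral_ball_enorm_rpow_neg_lt_top (hE : 1 ≤ finrank ℝ E) (hs : s < finrank ℝ E)
    (r : ℝ) : ∫⁻ z in ball 0 r, ‖z‖ₑ ^ (-s) ∂μ < ⊤ := by
  have : Nontrivial E := Module.nontrivial_of_finrank_pos (R := ℝ) (by omega)
  have hint : IntegrableOn (fun z : E => ‖z‖ ^ (-s)) (ball 0 r) μ :=
    integrableOn_ball_of_norm_le_rpow (C := 1) hE hs
      (ae_of_all _ fun z => by simp [abs_of_nonneg (Real.rpow_nonneg (norm_nonneg z) _)])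
      ((measurable_norm.pow_const (-s)).aestronglyMeasurable)
  have hae : ∀ᵐ z ∂μ.restrict (ball 0 r), ‖z‖ₑ ^ (-s) = ‖‖z‖ ^ (-s)‖ₑ := by
    filter_upwards [ae_restrict_of_ae (compl_mem_ae_iff.2 (measure_singleton (μ := μ) 0))]
      with z hz
    rw [Real.enorm_of_nonneg (by positivity), ← ENNReal.ofReal_rpow_of_pos
      (norm_pos_iff.2 hz), ofReal_norm]
  exact (lintegral_congr_ae hae).trans_lt hint.2

theorem energy_restrict_ball_lt_top (hE : 1 ≤ finrank ℝ E) (hs : s < finrank ℝ E) (r : ℝ) :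
    (μ.restrict (ball 0 r)).energy s < ⊤ := by
  set K := ∫⁻ z in ball 0 (2 * r), ‖z‖ₑ ^ (-s) ∂μ
  calc (μ.restrict (ball 0 r)).energy s
      = ∫⁻ x in ball 0 r, ∫⁻ y in ball 0 r, edist x y ^ (-s) ∂μ ∂μ :=
        lintegral_prod _ (measurable_edist_rpow s).aemeasurable
    _ ≤ ∫⁻ _ in ball 0 r, K ∂μ :=
        setLIntegral_mono' measurableSet_ball fun x hx => lintegral_ball_edist_rpow_neg_le hx
    _ = K * μ (ball 0 r) := setLIntegral_const _ _
    _ < ⊤ := mul_lt_top (lintegral_ball_enorm_rpow_neg_lt_top hE hs _) measure_ball_lt_top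

theorem energy_cond_ball_lt_top (hE : 1 ≤ finrank ℝ E) (hs : s < finrank ℝ E) {r : ℝ}
    (hr : 0 < r) : (μ[|ball 0 r]).energy s < ⊤ := by
  have hinv : (μ (ball 0 r))⁻¹ ≠ ⊤ := inv_ne_top.2 (measure_ball_pos μ 0 hr).ne'
  rw [ProbabilityTheory.cond, Measure.energy_smul]
  exact mul_lt_top (mul_lt_top hinv.lt_top hinv.lt_top) (energy_restrict_ball_lt_top hE hs r)

end HaarBall

namespace EuclideanSpace

def extendByZero {m n : ℕ} (x : EuclideanSpace ℝ (Fin m)) : EuclideanSpace ℝ (Fin n) :=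
  WithLp.toLp 2 fun i => if h : (i : ℕ) < m then x ⟨i, h⟩ else 0

variable {m n : ℕ}

theorem extendByZero_apply_of_not_lt (x : EuclideanSpace ℝ (Fin m)) {i : Fin n}
    (hi : ¬(i : ℕ) < m) :
    extendByZero x i = 0 :=
  dif_neg hi

theorem isometry_extendByZero (h : m ≤ n) :
    Isometry (extendByZero : EuclideanSpace ℝ (Fin m) → EuclideanSpace ℝ (Fin n)) := by
  refine Isometry.of_dist_eq fun x y => ?_
  rw [EuclideanSpace.dist_eq, EuclideanSpace.dist_eq]
  congr 1
  refine (Fintype.sum_of_injective (Fin.castLE h) (Fin.castLE_injective h) _ _ ?_ ?_).symm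
  · intro i hi
    have hi : ¬(i : ℕ) < m := fun hlt => hi ⟨⟨i, hlt⟩, rfl⟩
    simp [extendByZero_apply_of_not_lt _ hi]
  · intro j
    simp [extendByZero, j.isLt]

theorem norm_extendByZero (h : m ≤ n) (x : EuclideanSpace ℝ (Fin m)) :
    ‖(extendByZero x : EuclideanSpace ℝ (Fin n))‖ = ‖x‖ :=
  (isometry_extendByZero h).norm_map_of_map_zero (by ext i; simp [extendByZero]) x

end EuclideanSpace

open EuclideanSpace

/-- `D_R × [0, h]`, the last coordinate being the height. -/
def cylinder (n : ℕ) (hn : 1 ≤ n) (R h : ℝ) : Set (EuclideanSpace ℝ (Fin n)) :=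
  {x | Real.sqrt (∑ i : Fin n, if (i : ℕ) < n - 1 then (x i) ^ 2 else 0) ≤ R ∧
    0 ≤ x ⟨n - 1, by omega⟩ ∧ x ⟨n - 1, by omega⟩ ≤ h}

theorem extendByZero_smul_mem_cylinder {n : ℕ} (hn : 1 ≤ n) {R h : ℝ} (hR : 0 ≤ R) (hh : 0 ≤ h)
    {x : EuclideanSpace ℝ (Fin (n - 1))} (hx : x ∈ ball 0 1) :
    extendByZero (R • x) ∈ cylinder n hn R h := by
  set y : EuclideanSpace ℝ (Fin n) := extendByZero (R • x)
  have hlast : y ⟨n - 1, by omega⟩ = 0 := extendByZero_apply_of_not_lt _ (lt_irrefl _)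
  have hsum : (∑ i : Fin n, if (i : ℕ) < n - 1 then (y i) ^ 2 else 0) = ∑ i, ‖y i‖ ^ 2 := by
    refine Finset.sum_congr rfl fun i _ => ?_
    split_ifs with hi
    · rw [Real.norm_eq_abs, sq_abs]
    · simp [y, extendByZero_apply_of_not_lt _ hi]
  refine ⟨?_, hlast.ge, hlast.trans_le hh⟩
  rw [hsum, ← EuclideanSpace.norm_eq, norm_extendByZero (Nat.sub_le n 1), norm_smul,
    Real.norm_of_nonneg hR]
  exact mul_le_of_le_one_right hR (mem_ball_zero_iff.1 hx).le

theorem rieszEnergy_cylinder_le {n : ℕ} (hn : 1 ≤ n) (α : ℝ) {R h : ℝ} (hR : 0 ≤ R) (hh : 0 ≤ h)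
    (ν : Measure (EuclideanSpace ℝ (Fin (n - 1)))) [IsProbabilityMeasure ν]
    (hν : ν (ball 0 1) = 1) :
    rieszEnergy n α (cylinder n hn R h) ≤
      ENNReal.ofReal R ^ (-((n : ℝ) - α)) * ν.energy (n - α) := by
  set ψ : EuclideanSpace ℝ (Fin (n - 1)) → EuclideanSpace ℝ (Fin n) :=
    fun x => extendByZero (R • x)
  have hψ : Isometry extendByZero := isometry_extendByZero (m := n - 1) (n := n) (Nat.sub_le n 1)
  have hψm : Measurable ψ := hψ.continuous.measurable.comp (measurable_const_smul R)
  have hψR : ∀ x y, edist (ψ x) (ψ y) = ENNReal.ofReal R * edist x y := fun x y => by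
    rw [hψ.edist_eq, edist_smul₀, ENNReal.smul_def, smul_eq_mul, ← enorm_eq_nnnorm,
      Real.enorm_of_nonneg hR]
  have : IsProbabilityMeasure (ν.map ψ) := Measure.isProbabilityMeasure_map hψm.aemeasurable
  have hsupp : ν.map ψ (cylinder n hn R h) = 1 := by
    refine le_antisymm prob_le_one ?_
    calc 1 = ν (ball 0 1) := hν.symm
      _ ≤ ν (ψ ⁻¹' cylinder n hn R h) :=
          measure_mono fun x hx => extendByZero_smul_mem_cylinder hn hR hh hx
      _ ≤ ν.map ψ (cylinder n hn R h) := Measure.le_map_apply hψm.aemeasurable _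
  calc rieszEnergy n α (cylinder n hn R h) ≤ (ν.map ψ).energy (n - α) :=
        rieszEnergy_le_energy α _ hsupp
    _ = _ := Measure.energy_map_of_edist_eq _ ν hψm ofReal_ne_top hψR

theorem ENNReal.tendsto_ofReal_rpow_neg_mul_atTop {s : ℝ} (hs : 0 < s) {C : ℝ≥0∞}
    (hC : C ≠ ⊤) :
    Tendsto (fun R : ℝ => ENNReal.ofReal R ^ (-s) * C) atTop (𝓝 0) := by
  have h : Tendsto (fun x : ℝ≥0∞ => x ^ (-s)) (𝓝 ⊤) (𝓝 0) := by
    simpa [ENNReal.top_rpow_of_neg (neg_neg_of_pos hs)] using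
      (ENNReal.continuous_rpow_const (y := -s)).tendsto ⊤
  simpa using ENNReal.Tendsto.mul_const (h.comp ENNReal.tendsto_ofReal_atTop) (Or.inr hC)

/-- For the unit-volume cylinders `E_R = D_R × [0, ε_R]` with
`ε_R = (ω_{n-1} R^{n-1})⁻¹`, the `α`-Riesz energy tends to `0` as `R → ∞`,
for every `α ∈ (1, n)`. -/
theorem rieszEnergy_cylinder_tendsto_zero (n : ℕ) (hn : 2 ≤ n) (α : ℝ)
    (hα : 1 < α) (hαn : α < n) :
    Tendsto (fun R : ℝ => rieszEnergy n α
        {x : EuclideanSpace ℝ (Fin n) |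
          Real.sqrt (∑ i : Fin n, if (i : ℕ) < n - 1 then (x i) ^ 2 else 0) ≤ R ∧
          0 ≤ x ⟨n - 1, by omega⟩ ∧
          x ⟨n - 1, by omega⟩ ≤
            ((volume (Metric.ball (0 : EuclideanSpace ℝ (Fin (n - 1))) 1)).toReal *
              R ^ (n - 1))⁻¹})
      atTop (nhds 0) := by
  set B := ball (0 : EuclideanSpace ℝ (Fin (n - 1))) 1
  have hdim : 1 ≤ finrank ℝ (EuclideanSpace ℝ (Fin (n - 1))) := by
    rw [finrank_euclideanSpace_fin]; omega
  have hs : (n : ℝ) - α < finrank ℝ (EuclideanSpace ℝ (Fin (n - 1))) := by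
    rw [finrank_euclideanSpace_fin, Nat.cast_sub (by omega)]; push_cast; linarith
  have : IsProbabilityMeasure (volume[|B]) :=
    cond_isProbabilityMeasure_of_finite (measure_ball_pos _ _ one_pos).ne' measure_ball_lt_top.ne
  have hB : volume[|B] B = 1 :=
    cond_apply_self (measure_ball_pos _ _ one_pos).ne' measure_ball_lt_top.ne
  have hfin : (volume[|B]).energy ((n : ℝ) - α) ≠ ⊤ :=
    (energy_cond_ball_lt_top hdim hs one_pos).ne
  refine tendsto_of_tendsto_of_tendsto_of_le_of_le' tendsto_const_nhds
    (ENNReal.tendsto_ofReal_rpow_neg_mul_atTop (s := n - α) (by linarith) hfin)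
    (Eventually.of_forall fun _ => zero_le) ?_
  filter_upwards [eventually_ge_atTop 0] with R hR
  exact rieszEnergy_cylinder_le (by omega) α (h := ((volume B).toReal * R ^ (n - 1))⁻¹) hR
    (by positivity) _ hB
end
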